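/- Let F = (A, R) and G = (A, R') be argumentation frameworks on the same set of arguments with R ⊆ R' and conf(F) = conf(G). If S is a cf1.5-extension of F, then S is a cf1.5-extension of G. (In particular, cf1.5 satisfies ⪯ᴱ∩- and ⪯ᴱ_W-skepticism adequacy.) -/

import Mathlib

/-!
Basic notions of abstract argumentation frameworks, following
Andrews–San Mauro, "SCC-recursiveness in infinite argumentation".
-/

universe u

/-- An argumentation framework: a set `A` of arguments together with an
attack relation `R ⊆ A × A`. -/
structure AF (α : Type u) where
  A : Set α
  R : α → α → Prop
  attack_mem : ∀ ⦃a b : α⦄, R a b → a ∈ A ∧ b ∈ A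

namespace AF

variable {α : Type u}

/-- The restriction `F↾U = (A ∩ U, R ∩ (U × U))`. -/
def restrict (F : AF α) (U : Set α) : AF α where
  A := F.A ∩ U
  R a b := F.R a b ∧ a ∈ U ∧ b ∈ U
  attack_mem := by
    intro a b h
    exact ⟨⟨(F.attack_mem h.1).1, h.2.1⟩, ⟨(F.attack_mem h.1).2, h.2.2⟩⟩

/-- `S` is conflict-free: `S ⊆ A` and no argument of `S` attacks another. -/
def ConflictFree (F : AF α) (S : Set α) : Prop :=
  S ⊆ F.A ∧ ∀ a ∈ S, ∀ b ∈ S, ¬ F.R a b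

/-- `S` is a naive extension: conflict-free and ⊆-maximal among conflict-free sets. -/
def Naive (F : AF α) (S : Set α) : Prop :=
  ConflictFree F S ∧ ∀ T, ConflictFree F T → S ⊆ T → S = T

/-- `S⁺`: the set of arguments attacked by `S`. -/
def plus (F : AF α) (S : Set α) : Set α := {x | ∃ y ∈ S, F.R y x}

/-- The range `S⊕ = S ∪ S⁺`. -/
def rng (F : AF α) (S : Set α) : Set α := S ∪ plus F S

/-- `S` is a stage extension: conflict-free with ⊆-maximal range among
conflict-free sets. -/
def Stage (F : AF α) (S : Set α) : Prop :=
  ConflictFree F S ∧ ¬ ∃ T, ConflictFree F T ∧ rng F S ⊂ rng F T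

/-- `F` is finitary: every argument has finitely many attackers. -/
def Finitary (F : AF α) : Prop := ∀ a, {x | F.R x a}.Finite

/-- There is a directed path from `a` to `b` in `F` (both being arguments of `F`). -/
def Reach (F : AF α) (a b : α) : Prop :=
  a ∈ F.A ∧ b ∈ F.A ∧ Relation.ReflTransGen F.R a b

/-- The strongly connected component of `a` in `F`. -/
def SCCof (F : AF α) (a : α) : Set α := {b | Reach F a b ∧ Reach F b a}

/-- `X` is a strongly connected component of `F`. -/
def IsSCC (F : AF α) (X : Set α) : Prop := ∃ a ∈ F.A, X = SCCof F a

/-- `D_S(X)`: the elements of `X` attacked by an element of `S` outside `X`. -/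
def Dset (F : AF α) (S X : Set α) : Set α := {b ∈ X | ∃ a ∈ S \ X, F.R a b}

/-- `S` is a cf1.5-extension of `F`. -/
def CF15 (F : AF α) (S : Set α) : Prop :=
  ConflictFree F S ∧
    ∀ X, IsSCC F X → Naive (F.restrict (X \ Dset F S X)) (S ∩ X)

/-- `S` is a stg1.5-extension of `F`. -/
def STG15 (F : AF α) (S : Set α) : Prop :=
  ConflictFree F S ∧
    ∀ X, IsSCC F X → Stage (F.restrict (X \ Dset F S X)) (S ∩ X)

/-- `C_S^α(a)`, defined by transfinite recursion. -/
noncomputable def Cseq (F : AF α) (S : Set α) (a : α) (o : Ordinal.{0}) : Set α :=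
  Ordinal.limitRecOn o (SCCof F a)
    (fun _ C => SCCof (F.restrict (C \ Dset F S C)) a)
    (fun o' _ ih => SCCof (F.restrict (⋂ β : {β : Ordinal.{0} // β < o'}, ih β.1 β.2)) a)

/-- The component ordinal `α_S(a)`: the least `α` with `a ∉ C_S^α(a)` or
`C_S^{α+1}(a) = C_S^α(a)`. -/
noncomputable def alphaS (F : AF α) (S : Set α) (a : α) : Ordinal.{0} :=
  sInf {o | a ∉ Cseq F S a o ∨ Cseq F S a (o + 1) = Cseq F S a o}

/-- `S` is an icft-extension (tfcf2-extension) of `F`. -/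
def ICFT (F : AF α) (S : Set α) : Prop :=
  ConflictFree F S ∧ ∀ a ∈ F.A,
    a ∉ Cseq F S a (alphaS F S a) ∨
      Naive (F.restrict (Cseq F S a (alphaS F S a))) (S ∩ Cseq F S a (alphaS F S a))

/-- `S` is an istgt-extension (tf-stg2-extension) of `F`. -/
def ISTGT (F : AF α) (S : Set α) : Prop :=
  ConflictFree F S ∧ ∀ a ∈ F.A,
    a ∉ Cseq F S a (alphaS F S a) ∨
      Stage (F.restrict (Cseq F S a (alphaS F S a))) (S ∩ Cseq F S a (alphaS F S a))

/-- The characteristic function `f_F`. -/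
def charF (F : AF α) (S : Set α) : Set α :=
  {x ∈ F.A | ∀ y, F.R y x → ∃ z ∈ S, F.R z y}

/-- `G` is the grounded extension of `F`: the least fixed point of `f_F`. -/
def IsGrounded (F : AF α) (G : Set α) : Prop :=
  charF F G = G ∧ ∀ T, charF F T = T → G ⊆ T

/-- `conf(F)`: the set of conflicting pairs of `F`. -/
def confl (F : AF α) : Set (α × α) := {p | F.R p.1 p.2 ∨ F.R p.2 p.1}

/-- The operator `Δ_{F,S}(D)`. -/
def DeltaOp (F : AF α) (S D : Set α) : Set α :=
  {a ∈ F.A | ∃ b ∈ S, F.R b a ∧ ¬ Reach (F.restrict (F.A \ D)) a b}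

/-- `Δ^α_{F,S}`, defined by transfinite recursion. -/
noncomputable def Deltaseq (F : AF α) (S : Set α) (o : Ordinal.{0}) : Set α :=
  Ordinal.limitRecOn o (∅ : Set α)
    (fun _ D => DeltaOp F S D)
    (fun o' _ ih => ⋃ β : {β : Ordinal.{0} // β < o'}, ih β.1 β.2)

/-- The least fixed point `Δ_{F,S}` of the monotone operator `Δ_{F,S}(·)`,
given by Knaster–Tarski as the intersection of all prefixed points. -/
def DeltaFix (F : AF α) (S : Set α) : Set α :=
  ⋂₀ {D | DeltaOp F S D ⊆ D}

end AF

/-!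
Adding attacks that only reverse existing conflicts keeps `S` conflict-free and can only merge
`F`-components, so each `F`-component `Y` of an argument lies inside its `G`-component `X`. If an
argument `a` of `X \ D^G_S(X)` is compatible with `S ∩ X` in `G`, then `a` is not attacked by `S`
from outside `Y` (an attacker inside `X` would conflict with `a`, one outside `X` would put `a` into
`D^G_S(X)`), and `a` is compatible with `S ∩ Y` in `F`; naivety of `S ∩ Y` then gives `a ∈ S`.
-/

namespace AF

variable {α : Type u} {F G : AF α} {S T : Set α}

theorem ConflictFree.mono (hT : ConflictFree F T) (hST : S ⊆ T) : ConflictFree F S :=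
  ⟨hST.trans hT.1, fun a ha b hb => hT.2 a (hST ha) b (hST hb)⟩

theorem ConflictFree.of_attack_le (hS : ConflictFree G S) (hA : G.A ⊆ F.A)
    (hR : ∀ a b, F.R a b → G.R a b) : ConflictFree F S :=
  ⟨hS.1.trans hA, fun a ha b hb h => hS.2 a ha b hb (hR a b h)⟩

theorem ConflictFree.of_confl_subset (hS : ConflictFree F S) (hA : F.A ⊆ G.A)
    (hconf : confl G ⊆ confl F) : ConflictFree G S := by
  refine ⟨hS.1.trans hA, fun a ha b hb h => ?_⟩
  rcases hconf (Or.inl h : (a, b) ∈ confl G) with h' | h'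
  · exact hS.2 a ha b hb h'
  · exact hS.2 b hb a ha h'

theorem conflictFree_restrict_iff {U : Set α} :
    ConflictFree (F.restrict U) S ↔ ConflictFree F S ∧ S ⊆ U :=
  ⟨fun h => ⟨⟨fun _ ha => (h.1 ha).1,
        fun a ha b hb hab => h.2 a ha b hb ⟨hab, (h.1 ha).2, (h.1 hb).2⟩⟩,
      fun _ ha => (h.1 ha).2⟩,
    fun ⟨h, hU⟩ =>
      ⟨fun _ ha => ⟨h.1 ha, hU ha⟩, fun a ha b hb hab => h.2 a ha b hb hab.1⟩⟩

theorem naive_iff_forall_insert :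
    Naive F S ↔ ConflictFree F S ∧ ∀ a, ConflictFree F (insert a S) → a ∈ S :=
  ⟨fun h => ⟨h.1, fun a ha => h.2 _ ha (Set.subset_insert a S) ▸ Set.mem_insert a S⟩,
    fun ⟨hS, h⟩ => ⟨hS, fun _ hT hST =>
      hST.antisymm fun a ha => h a (hT.mono (Set.insert_subset ha hST))⟩⟩

theorem inter_subset_diff_Dset (hS : ConflictFree F S) (X : Set α) :
    S ∩ X ⊆ X \ Dset F S X :=
  fun b ⟨hbS, hbX⟩ => ⟨hbX, fun ⟨_, c, ⟨hcS, _⟩, hcb⟩ => hS.2 c hcS b hbS hcb⟩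

theorem Reach.mono {a b : α} (h : Reach F a b) (hA : F.A ⊆ G.A)
    (hR : ∀ a b, F.R a b → G.R a b) : Reach G a b :=
  ⟨hA h.1, hA h.2.1, Relation.ReflTransGen.mono hR _ _ h.2.2⟩

theorem Reach.trans {a b c : α} (hab : Reach F a b) (hbc : Reach F b c) : Reach F a c :=
  ⟨hab.1, hbc.2.1, hab.2.2.trans hbc.2.2⟩

theorem mem_SCCof_self {a : α} (ha : a ∈ F.A) : a ∈ SCCof F a :=
  ⟨⟨ha, ha, .refl⟩, ⟨ha, ha, .refl⟩⟩

theorem SCCof_subset_of_mem {a b : α} (hA : F.A ⊆ G.A) (hR : ∀ a b, F.R a b → G.R a b)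
    (hb : b ∈ SCCof G a) : SCCof F b ⊆ SCCof G a :=
  fun _ ⟨hbc, hcb⟩ => ⟨hb.1.trans (hbc.mono hA hR), (hcb.mono hA hR).trans hb.2⟩

theorem CF15.mem_of_conflictFree_insert (hS : CF15 F S) (hA : F.A = G.A)
    (hR : ∀ a b, F.R a b → G.R a b) {x a : α} (ha : a ∈ SCCof G x)
    (haD : a ∉ Dset G S (SCCof G x)) (hcf : ConflictFree G (insert a (S ∩ SCCof G x))) :
    a ∈ S := by
  have haF : a ∈ F.A := hA ▸ hcf.1 (Set.mem_insert a _)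
  have hYX : SCCof F a ⊆ SCCof G x := SCCof_subset_of_mem hA.le hR ha
  have haD' : a ∉ Dset F S (SCCof F a) := by
    rintro ⟨-, c, ⟨hcS, -⟩, hca⟩
    by_cases hcX : c ∈ SCCof G x
    · exact hcf.2 c (Set.mem_insert_of_mem a ⟨hcS, hcX⟩) a (Set.mem_insert a _) (hR c a hca)
    · exact haD ⟨ha, c, ⟨hcS, hcX⟩, hR c a hca⟩
  have hcfF : ConflictFree F (insert a (S ∩ SCCof F a)) :=
    (hcf.mono (Set.insert_subset_insert (Set.inter_subset_inter_right S hYX))).of_attack_le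
      hA.ge hR
  have hV : insert a (S ∩ SCCof F a) ⊆ SCCof F a \ Dset F S (SCCof F a) :=
    Set.insert_subset ⟨mem_SCCof_self haF, haD'⟩ (inter_subset_diff_Dset hS.1 _)
  exact ((naive_iff_forall_insert.1 (hS.2 _ ⟨a, haF, rfl⟩)).2 a
    (conflictFree_restrict_iff.2 ⟨hcfF, hV⟩)).1

end AF

/-- cf1.5 skepticism adequacy transfer. -/
theorem statement15 {α : Type u} (F G : AF α) (hA : F.A = G.A)
    (hR : ∀ a b, F.R a b → G.R a b) (hconf : AF.confl F = AF.confl G)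
    (S : Set α) (hS : AF.CF15 F S) : AF.CF15 G S := by
  have hcfG : AF.ConflictFree G S := hS.1.of_confl_subset hA.le hconf.ge
  refine ⟨hcfG, ?_⟩
  rintro _ ⟨x, -, rfl⟩
  refine AF.naive_iff_forall_insert.2
    ⟨AF.conflictFree_restrict_iff.2 ⟨hcfG.mono Set.inter_subset_left,
      AF.inter_subset_diff_Dset hcfG _⟩, fun a ha => ?_⟩
  obtain ⟨hcf, hU⟩ := AF.conflictFree_restrict_iff.1 ha
  obtain ⟨haX, haD⟩ := hU (Set.mem_insert a _)
  exact ⟨hS.mem_of_conflictFree_insert hA hR haX haD hcf, haX⟩
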